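/- arXiv:math/0009041 — 2 statements merged into one kernel-verified Lean document; each statement's English description precedes it below -/
import Mathlib

section
/- For s ∈ ℂ, there exists a point (x, y, z) ∈ ℂ³ with (x, y, z) ≠ (0, 0, 0) at which H_s and all three partial derivatives ∂H_s/∂x, ∂H_s/∂y, ∂H_s/∂z vanish (i.e. the plane cubic curve H_s = 0 in ℙ² is singular) if and only if s ∈ {8, −1, 0}. -/
/-- For `s ∈ ℂ`, the plane cubic `H_s = 0` in `ℙ²`, where
`H_s(x,y,z) = (s+1)xyz − (x+y+z)(yz+zx+xy)`, is singular — i.e. there is a point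
`(x,y,z) ≠ (0,0,0)` at which `H_s` and its three partial derivatives vanish —
if and only if `s ∈ {8, −1, 0}`. -/
theorem H_singular_iff (s : ℂ) :
    (∃ x y z : ℂ, (x, y, z) ≠ (0, 0, 0) ∧
      (s + 1) * x * y * z - (x + y + z) * (y * z + z * x + x * y) = 0 ∧
      (s + 1) * y * z - (y * z + z * x + x * y) - (x + y + z) * (y + z) = 0 ∧
      (s + 1) * x * z - (y * z + z * x + x * y) - (x + y + z) * (x + z) = 0 ∧
      (s + 1) * x * y - (y * z + z * x + x * y) - (x + y + z) * (x + y) = 0) ↔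
    s = 8 ∨ s = -1 ∨ s = 0 := by
  constructor
  · rintro ⟨x, y, z, hne, _h0, e1, e2, e3⟩
    have h12 : (y - x) * ((s + 1) * z - (x + y + z)) = 0 := by
      linear_combination e1 - e2
    have h23 : (y - z) * ((s + 1) * x - (x + y + z)) = 0 := by
      linear_combination e3 - e2
    have h13 : (x - z) * ((s + 1) * y - (x + y + z)) = 0 := by
      linear_combination e3 - e1
    rcases mul_eq_zero.mp h12 with h | hzT
    · -- y = x
      have hy : y = x := sub_eq_zero.mp h
      rw [hy] at e1 hne h23
      rcases mul_eq_zero.mp h23 with h' | hxT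
      · -- z = x too : all equal
        have hz : z = x := (sub_eq_zero.mp h').symm
        rw [hz] at e1 hne
        have h8 : (s - 8) * x ^ 2 = 0 := by linear_combination e1
        rcases mul_eq_zero.mp h8 with h8 | hx0
        · exact Or.inl (by linear_combination h8)
        · have hx : x = 0 := pow_eq_zero_iff two_ne_zero |>.mp hx0
          exact absurd (by rw [hx]) hne
      · -- y = x, (s+1)x = T
        have hz : z = (s - 1) * x := by linear_combination -hxT
        rw [hz] at e1 hne
        have hs0 : s * x ^ 2 = 0 := by linear_combination (-1/3 : ℂ) * e1
        rcases mul_eq_zero.mp hs0 with hs | hx0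
        · exact Or.inr (Or.inr hs)
        · have hx : x = 0 := pow_eq_zero_iff two_ne_zero |>.mp hx0
          exact absurd (by simp [hx]) hne
    · rcases mul_eq_zero.mp h23 with h' | hxT
      · -- y = z, (s+1)z = T
        have hy : y = z := sub_eq_zero.mp h'
        rw [hy] at e2 hne hzT
        have hx : x = (s - 1) * z := by linear_combination -hzT
        rw [hx] at e2 hne
        have hs0 : s * z ^ 2 = 0 := by linear_combination (-1/3 : ℂ) * e2
        rcases mul_eq_zero.mp hs0 with hs | hz0
        · exact Or.inr (Or.inr hs)
        · have hz : z = 0 := pow_eq_zero_iff two_ne_zero |>.mp hz0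
          exact absurd (by simp [hz]) hne
      · rcases mul_eq_zero.mp h13 with h'' | hyT
        · -- x = z, (s+1)z = T
          have hx : x = z := sub_eq_zero.mp h''
          rw [hx] at e3 hne hxT
          have hy : y = (s - 1) * z := by linear_combination -hxT
          rw [hy] at e3 hne
          have hs0 : s * z ^ 2 = 0 := by linear_combination (-1/3 : ℂ) * e3
          rcases mul_eq_zero.mp hs0 with hs | hz0
          · exact Or.inr (Or.inr hs)
          · have hz : z = 0 := pow_eq_zero_iff two_ne_zero |>.mp hz0
            exact absurd (by simp [hz]) hne
        · -- (s+1)x = (s+1)y = T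
          have h : (s + 1) * (x - y) = 0 := by linear_combination hxT - hyT
          rcases mul_eq_zero.mp h with h | h
          · exact Or.inr (Or.inl (by linear_combination h))
          · have hx : x = y := sub_eq_zero.mp h
            rw [hx] at e3 hne hyT
            have hz : z = (s - 1) * y := by linear_combination -hyT
            rw [hz] at e3 hne
            have hs0 : s * y ^ 2 = 0 := by linear_combination (-1/3 : ℂ) * e3
            rcases mul_eq_zero.mp hs0 with hs | hy0
            · exact Or.inr (Or.inr hs)
            · have hy : y = 0 := pow_eq_zero_iff two_ne_zero |>.mp hy0
              exact absurd (by simp [hy]) hne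
  · rintro (rfl | rfl | rfl)
    · exact ⟨1, 1, 1, by simp, by ring, by ring, by ring, by ring⟩
    · have hw : (Complex.I * Real.sqrt 3) ^ 2 = -3 := by
        rw [mul_pow, Complex.I_sq]
        norm_cast
        rw [Real.sq_sqrt (by norm_num : (0:ℝ) ≤ 3)]
        push_cast; ring
      refine ⟨1, (-1 + Complex.I * Real.sqrt 3) / 2,
        (-1 - Complex.I * Real.sqrt 3) / 2, by simp, by ring, ?_, ?_, ?_⟩ <;>
        linear_combination (1/4 : ℂ) * hw
    · exact ⟨1, 1, -1, by simp, by ring, by ring, by ring, by ring⟩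
end

section
/- Let P(u, x, y) := (1+u)xy − u(x+y+1)(x+y+xy) ∈ ℂ[u, x, y]. The unique point (u, x, y) ∈ ℂ³ at which P and all three partial derivatives ∂P/∂u, ∂P/∂x, ∂P/∂y vanish simultaneously is (0, 0, 0). (In the affine chart z = 1, u = 1/s, this is the assertion that the only singular point of the hypersurface S there is the point [s, [x:y:z]] = [∞, [0:0:1]].) -/
/-- Let `P(u,x,y) = (1+u)xy − u(x+y+1)(x+y+xy)`, the defining equation of the surface
`S` in the affine chart `z = 1`, `u = 1/s`.  The unique point of `ℂ³` at which `P` and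
its three partial derivatives `∂P/∂u`, `∂P/∂x`, `∂P/∂y` vanish simultaneously is
`(0, 0, 0)`. -/
theorem unique_singular_point_chart (u x y : ℂ) :
    ((1 + u) * x * y - u * (x + y + 1) * (x + y + x * y) = 0 ∧
      x * y - (x + y + 1) * (x + y + x * y) = 0 ∧
      (1 + u) * y - u * ((x + y + x * y) + (x + y + 1) * (1 + y)) = 0 ∧
      (1 + u) * x - u * ((x + y + x * y) + (x + y + 1) * (1 + x)) = 0) ↔
    (u, x, y) = (0, 0, 0) := by
  constructor
  · rintro ⟨h1, h2, h3, h4⟩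
    have hxy : x * y = 0 := by linear_combination h1 - u * h2
    rcases mul_eq_zero.mp hxy with hx | hy
    · subst hx
      have hy2 : y * (y + 1) = 0 := by linear_combination -h2
      rcases mul_eq_zero.mp hy2 with hy | hy1
      · subst hy
        have hu : u = 0 := by linear_combination -h3
        simp [hu]
      · have hy : y = -1 := by linear_combination hy1
        subst hy
        have : (-1 : ℂ) = 0 := by linear_combination h3
        exact absurd this (by norm_num)
    · subst hy
      have hx2 : x * (x + 1) = 0 := by linear_combination -h2
      rcases mul_eq_zero.mp hx2 with hx | hx1
      · subst hx
        have hu : u = 0 := by linear_combination -h4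
        simp [hu]
      · have hx : x = -1 := by linear_combination hx1
        subst hx
        have : (-1 : ℂ) = 0 := by linear_combination h4
        exact absurd this (by norm_num)
  · intro h
    simp only [Prod.mk.injEq] at h
    obtain ⟨hu, hx, hy⟩ := h
    subst hu; subst hx; subst hy
    norm_num
end
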